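/- For every n ≥ 1, setting m = 16n² + 36n + 19, the finite-state complexity of x_n(m) with respect to the standard encoding satisfies C(x_n(m)) < m²/2. -/

import Mathlib

/-! In state `j` the transducer `T₁` turns each `0` into `u_j^m` and each `1` into a move to state
`j + 1`, except in the last state, where `1` emits `u_{2n+1}^m`; hence `T₁(p₁) = x_n(m)`.
Every transition of the standard encoding costs twice its output plus `O(n)` bits, so
`|σ| ≤ 2(2n+1)(2n+3)m + O(n²)`, while `|p₁| ≤ (2n+1)m + 2n`. Thus
`2C(x_n(m)) ≤ (16n² + 36n + 14)m + O(n²)`, which is below `m² = (16n² + 36n + 19)m`. -/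

/-! ## Transducers

A deterministic sequential transducer over the binary alphabet `Bool`
(`false` = 0, `true` = 1), with state set `{0, …, n-1}` (representing the
states `1, …, n` of the paper) and start state `0` (the paper's state `1`). -/

structure Transducer where
  n : ℕ
  npos : 0 < n
  delta : Fin n → Bool → Fin n × List Bool

namespace Transducer

/-- The start state. -/
def start (T : Transducer) : Fin T.n := ⟨0, T.npos⟩

/-- The (state) size of a transducer: its number of states. -/
def size (T : Transducer) : ℕ := T.n

/-- Running `T` from state `q` on an input string: resulting state and output. -/
def run (T : Transducer) (q : Fin T.n) : List Bool → Fin T.n × List Bool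
  | [] => (q, [])
  | a :: x =>
    let s := T.delta q a
    let r := T.run s.1 x
    (r.1, s.2 ++ r.2)

/-- The function `{0,1}* → {0,1}*` computed by the transducer `T`. -/
def output (T : Transducer) (p : List Bool) : List Bool :=
  (T.run T.start p).2

end Transducer

/-- The one-state identity transducer. -/
def idTransducer : Transducer :=
  ⟨1, Nat.one_pos, fun q b => (q, [b])⟩

/-! ## The standard encoding `S₀` -/

/-- `bin i`: the binary representation of `i ≥ 1`, most significant bit first. -/
def binRep (i : ℕ) : List Bool := (Nat.bits i).reverse

/-- `v† = v₁0v₂0⋯v_{m-1}0v_m1`. -/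
def dagger : List Bool → List Bool
  | [] => []
  | [a] => [a, true]
  | a :: b :: v => a :: false :: dagger (b :: v)

/-- `v◇`: the bitwise complement of `(1v)†`. -/
def diamond (v : List Bool) : List Bool := (dagger (true :: v)).map (!·)

/-- The encoding `bin(i_t)‡ ⬝ v_t◇` of a single transition from state `j`,
where `bin(i_t)‡ = ε` for a self-loop and `bin(i_t)† ` otherwise. -/
def encTransition {n : ℕ} (j : Fin n) (t : Fin n × List Bool) : List Bool :=
  (if t.1 = j then [] else dagger (binRep (t.1.val + 1))) ++ diamond t.2

/-- The standard encoding of a transducer: the concatenation, over the states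
`j = 1, …, n` in order, of the encodings of the transitions on input `0` and
input `1` from `j`. -/
def stdEnc (T : Transducer) : List Bool :=
  (List.finRange T.n).flatMap fun j =>
    encTransition j (T.delta j false) ++ encTransition j (T.delta j true)

/-- `D_{S₀}`, the set of standard encodings of transducers. -/
def DS0 : Set (List Bool) := Set.range stdEnc

/-- The set of sizes `|σ| + |p|` of descriptions `(T_σ, p)` of `x` with respect
to the standard encoding. -/
def stdSizes (x : List Bool) : Set ℕ :=
  {c | ∃ (T : Transducer) (p : List Bool),
    T.output p = x ∧ c = (stdEnc T).length + p.length}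

/-- `C x`: the finite-state complexity of `x` w.r.t. the standard encoding. -/
noncomputable def Cstd (x : List Bool) : ℕ := sInf (stdSizes x)

/-- `L_{≤ m}` w.r.t. the standard encoding: strings having a minimal
description by a transducer with at most `m` states. -/
def stdLle (m : ℕ) : Set (List Bool) :=
  {x | ∃ (T : Transducer) (p : List Bool),
    T.output p = x ∧ (stdEnc T).length + p.length = Cstd x ∧ T.size ≤ m}

/-! ## Computable encodings -/

/-- A computable encoding `S = (D_S, f_S)` of all transducers: a decidable
(computable) set `D_S ⊆ {0,1}*` together with a computable bijection
`f_S : D_S → 𝒯_DGSM`, presented via a decoding function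
`decode : {0,1}* → Option Transducer` defined exactly on `D_S`; its
computability is expressed via the (injective) standard encoding `stdEnc`. -/
structure CompEncoding where
  D : Set (List Bool)
  dec : ComputablePred (· ∈ D)
  decode : List Bool → Option Transducer
  decode_dom : ∀ σ, (decode σ).isSome ↔ σ ∈ D
  decode_inj : ∀ σ₁ ∈ D, ∀ σ₂ ∈ D, decode σ₁ = decode σ₂ → σ₁ = σ₂
  decode_surj : ∀ T : Transducer, ∃ σ, decode σ = some T
  decode_comp : Computable fun σ => (decode σ).map stdEnc

namespace CompEncoding

/-- The set of sizes `|σ| + |p|` of descriptions `(T^S_σ, p)` of `x`. -/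
def sizes (S : CompEncoding) (x : List Bool) : Set ℕ :=
  {c | ∃ (σ : List Bool) (T : Transducer) (p : List Bool),
    S.decode σ = some T ∧ T.output p = x ∧ c = σ.length + p.length}

/-- `C_S x`: the finite-state complexity of `x` w.r.t. the encoding `S`. -/
noncomputable def C (S : CompEncoding) (x : List Bool) : ℕ := sInf (S.sizes x)

/-- `L^S_{≤ m}`: strings having a minimal description by a transducer with at
most `m` states (this is empty for `m = 0` since every transducer has at
least one state). -/
def Lle (S : CompEncoding) (m : ℕ) : Set (List Bool) :=
  {x | ∃ (σ : List Bool) (T : Transducer) (p : List Bool),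
    S.decode σ = some T ∧ T.output p = x ∧
    σ.length + p.length = S.C x ∧ T.size ≤ m}

/-- `L^S_{= m} = L^S_{≤ m} \ L^S_{≤ m-1}`. -/
def Leq (S : CompEncoding) (m : ℕ) : Set (List Bool) := S.Lle m \ S.Lle (m - 1)

/-- `L^S_{∃min m}`: strings having a minimal description by a transducer with
exactly `m` states. -/
def LexistsMin (S : CompEncoding) (m : ℕ) : Set (List Bool) :=
  {x | ∃ (σ : List Bool) (T : Transducer) (p : List Bool),
    S.decode σ = some T ∧ T.output p = x ∧
    σ.length + p.length = S.C x ∧ T.size = m}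

end CompEncoding

/-! ## The strings `u_i` and `x_n(m)` from the proof of Theorem 1 -/

/-- `u_i = 1 0^i 1^{2n+2-i}` (for `1 ≤ i ≤ 2n+1`, a string of length `2n+3`). -/
def u (n i : ℕ) : List Bool :=
  true :: (List.replicate i false ++ List.replicate (2 * n + 2 - i) true)

/-- `x_n(m) = u_1^{m²} u_2^{m²} ⋯ u_{2n+1}^{m²}`. -/
def xnm (n m : ℕ) : List Bool :=
  (List.range (2 * n + 1)).flatMap fun i => (List.replicate (m ^ 2) (u n (i + 1))).flatten

/-! ## The transducer `T₁` and input `p₁` from the proof of Theorem 1 -/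

/-- The `2n`-state transducer `T₁` with `Δ(j,0) = (j, u_j^m)` for `1 ≤ j ≤ 2n`,
`Δ(j,1) = (j+1, ε)` for `1 ≤ j ≤ 2n-1`, and `Δ(2n,1) = (2n, u_{2n+1}^m)`. -/
def T1 (n m : ℕ) (hn : 0 < n) : Transducer where
  n := 2 * n
  npos := by omega
  delta := fun j b =>
    match b with
    | false => (j, (List.replicate m (u n (j.val + 1))).flatten)
    | true =>
      if h : j.val + 1 < 2 * n then (⟨j.val + 1, h⟩, [])
      else (j, (List.replicate m (u n (2 * n + 1))).flatten)

/-- `p₁ = (0^m 1)^{2n-1} 0^m 1^m`. -/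
def p1 (n m : ℕ) : List Bool :=
  (List.replicate (2 * n - 1) (List.replicate m false ++ [true])).flatten
    ++ List.replicate m false ++ List.replicate m true

/-! ## The transducers `T_n` from Section 5 -/

/-- `p_i`: the `i`-th prime (`p₁ = 2`, `p₂ = 3`, …). -/
noncomputable def nthPrime (i : ℕ) : ℕ := Nat.nth Nat.Prime (i - 1)

/-- The `n`-state transducer `T_n` with `Δ_n(1,0) = (1, 0^{p_n})`,
`Δ_n(i,0) = (i, ε)` for `2 ≤ i ≤ n`, `Δ_n(j,1) = (j+1, ε)` for
`1 ≤ j ≤ n-1`, and `Δ_n(n,1) = (n, ε)`. -/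
noncomputable def Tsec5 (n : ℕ) (hn : 0 < n) : Transducer where
  n := n
  npos := hn
  delta := fun j b =>
    match b with
    | false =>
      if j.val = 0 then (j, List.replicate (nthPrime n) false) else (j, [])
    | true =>
      if h : j.val + 1 < n then (⟨j.val + 1, h⟩, []) else (j, [])

/-- The defining properties of the encoding `S₁` of Theorem 4: each `T_n` is
encoded by `bin(n)`, and every transducer that is not one of the `T_n` is
encoded by `0` concatenated with its standard encoding. -/
def IsS1 (S : CompEncoding) : Prop :=
  (∀ (n : ℕ) (hn : 0 < n), S.decode (binRep n) = some (Tsec5 n hn)) ∧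
  (∀ T : Transducer, (∀ (n : ℕ) (hn : 0 < n), T ≠ Tsec5 n hn) →
    S.decode (false :: stdEnc T) = some T)

/-- The defining properties of the encoding `S₁'` of Corollary 2: each `T_n` is
encoded by `bin(n)† ⬝ 1^n`, and every transducer `T` that is not one of the
`T_n`, with standard encoding `σ`, is encoded by `0 ⬝ σ† ⬝ 1^{2^{|σ|}}`. -/
def IsS1' (S : CompEncoding) : Prop :=
  (∀ (n : ℕ) (hn : 0 < n),
    S.decode (dagger (binRep n) ++ List.replicate n true) = some (Tsec5 n hn)) ∧
  (∀ T : Transducer, (∀ (n : ℕ) (hn : 0 < n), T ≠ Tsec5 n hn) →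
    S.decode (false :: (dagger (stdEnc T) ++
      List.replicate (2 ^ (stdEnc T).length) true)) = some T)

namespace Transducer

variable (T : Transducer)

theorem run_append (q : Fin T.n) (x y : List Bool) :
    T.run q (x ++ y) = ((T.run (T.run q x).1 y).1, (T.run q x).2 ++ (T.run (T.run q x).1 y).2) := by
  induction x generalizing q with
  | nil => simp [run]
  | cons a x ih => simp [run, ih]

theorem run_replicate_of_delta_eq {q : Fin T.n} {a : Bool} {v : List Bool}
    (h : T.delta q a = (q, v)) (k : ℕ) :
    T.run q (List.replicate k a) = (q, (List.replicate k v).flatten) := by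
  induction k with
  | zero => rfl
  | succ k ih => simp [List.replicate_succ, run, h, ih]

end Transducer

theorem flatten_replicate_flatten_replicate {α : Type*} (m k : ℕ) (v : List α) :
    (List.replicate m (List.replicate k v).flatten).flatten = (List.replicate (m * k) v).flatten := by
  induction m with
  | zero => simp
  | succ m ih => rw [List.replicate_succ, List.flatten_cons, ih, Nat.succ_mul, Nat.add_comm,
      List.replicate_add, List.flatten_append]

theorem dagger_length : ∀ v : List Bool, (dagger v).length = 2 * v.length
  | [] => rfl
  | [_] => rfl
  | a :: b :: v => by
    simp only [dagger, List.length_cons, dagger_length (b :: v)]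
    ring

theorem diamond_length (v : List Bool) : (diamond v).length = 2 * v.length + 2 := by
  simp only [diamond, List.length_map, dagger_length, List.length_cons]
  ring

theorem binRep_length_le (i : ℕ) : (binRep i).length ≤ i := by
  rw [binRep, List.length_reverse, Nat.size_eq_bits_len]
  exact Nat.size_le.mpr Nat.lt_two_pow_self

theorem encTransition_length_le {n : ℕ} (j : Fin n) (t : Fin n × List Bool) :
    (encTransition j t).length ≤ 2 * t.2.length + 2 * n + 2 := by
  have hbin := binRep_length_le (t.1.val + 1)
  have ht := t.1.isLt
  unfold encTransition
  split_ifs <;> simp only [List.length_append, List.length_nil, dagger_length, diamond_length] <;>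
    omega

theorem stdEnc_length_le (T : Transducer) :
    (stdEnc T).length ≤
      2 * ∑ j, ((T.delta j false).2.length + (T.delta j true).2.length) + T.n * (4 * T.n + 4) := by
  rw [stdEnc, List.length_flatMap, ← Fin.sum_univ_def, Finset.mul_sum]
  calc ∑ j, (encTransition j (T.delta j false) ++ encTransition j (T.delta j true)).length
      ≤ ∑ j : Fin T.n, (2 * ((T.delta j false).2.length + (T.delta j true).2.length)
          + (4 * T.n + 4)) := by
        refine Finset.sum_le_sum fun j _ => ?_
        have h0 := encTransition_length_le j (T.delta j false)
        have h1 := encTransition_length_le j (T.delta j true)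
        simp only [List.length_append]
        omega
    _ = _ := by simp [Finset.sum_add_distrib]

theorem Cstd_le_of_output {T : Transducer} {p x : List Bool} (h : T.output p = x) :
    Cstd x ≤ (stdEnc T).length + p.length :=
  Nat.sInf_le ⟨T, p, h, rfl⟩

theorem u_length (n : ℕ) {i : ℕ} (hi : i ≤ 2 * n + 2) : (u n i).length = 2 * n + 3 := by
  simp only [u, List.length_cons, List.length_append, List.length_replicate]
  omega

theorem p1_length (n m : ℕ) : (p1 n m).length = (2 * n - 1) * (m + 1) + 2 * m := by
  simp only [p1, List.length_append, List.length_flatten, List.map_replicate, List.length_replicate,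
    List.length_cons, List.length_nil, List.sum_replicate, smul_eq_mul]
  ring

section T1

variable (n m : ℕ) (hn : 0 < n)

theorem T1_n : (T1 n m hn).n = 2 * n := rfl

theorem T1_delta_false (j : Fin (T1 n m hn).n) :
    (T1 n m hn).delta j false = (j, (List.replicate m (u n (j.val + 1))).flatten) := rfl

theorem T1_delta_true_of_lt (j : Fin (T1 n m hn).n) (h : j.val + 1 < 2 * n) :
    (T1 n m hn).delta j true = (⟨j.val + 1, h⟩, []) := by
  simp [T1, h]

theorem T1_delta_true_last (j : Fin (T1 n m hn).n) (h : j.val = 2 * n - 1) :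
    (T1 n m hn).delta j true = (j, (List.replicate m (u n (2 * n + 1))).flatten) := by
  have hlast : ¬ j.val + 1 < 2 * n := by omega
  simp [T1, hlast]

theorem T1_run_blocks (c : ℕ) (hc : c < 2 * n) :
    (T1 n m hn).run (T1 n m hn).start (List.replicate c (List.replicate m false ++ [true])).flatten
      = (⟨c, hc⟩, (List.range c).flatMap fun i => (List.replicate (m ^ 2) (u n (i + 1))).flatten) := by
  induction c with
  | zero => rfl
  | succ c ih =>
    rw [List.replicate_succ', List.flatten_append, Transducer.run_append, ih (by omega),
      List.flatten_singleton, Transducer.run_append,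
      Transducer.run_replicate_of_delta_eq _ (T1_delta_false n m hn _)]
    simp [Transducer.run, T1_delta_true_of_lt n m hn ⟨c, (by omega : c < 2 * n)⟩ hc, List.range_succ,
      flatten_replicate_flatten_replicate, sq]

theorem T1_output_p1 : (T1 n m hn).output (p1 n m) = xnm n m := by
  have hlast : 2 * n - 1 < 2 * n := by omega
  rw [Transducer.output, p1, List.append_assoc, Transducer.run_append, T1_run_blocks n m hn _ hlast,
    Transducer.run_append, Transducer.run_replicate_of_delta_eq _ (T1_delta_false n m hn _),
    Transducer.run_replicate_of_delta_eq _ (T1_delta_true_last n m hn ⟨_, hlast⟩ rfl), xnm,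
    show 2 * n + 1 = 2 * n - 1 + 1 + 1 by omega, List.range_succ, List.range_succ]
  simp [flatten_replicate_flatten_replicate, sq]

theorem T1_sum_output_length :
    ∑ j, (((T1 n m hn).delta j false).2.length + ((T1 n m hn).delta j true).2.length)
      = (2 * n + 1) * (m * (2 * n + 3)) := by
  have hblock {i : ℕ} (hi : i ≤ 2 * n + 1) :
      ((List.replicate m (u n i)).flatten).length = m * (2 * n + 3) := by
    simp [List.sum_replicate, u_length n (i := i) (by omega)]
  have hzeros : ∑ j, ((T1 n m hn).delta j false).2.length = 2 * n * (m * (2 * n + 3)) := by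
    simp only [T1_delta_false]
    rw [Finset.sum_congr rfl fun j _ => hblock (by have : j.val < 2 * n := j.isLt; omega)]
    rw [Finset.sum_const, Finset.card_univ, Fintype.card_fin, T1_n, smul_eq_mul]
  have hlast : 2 * n - 1 < (T1 n m hn).n := by rw [T1_n]; omega
  have hones : ∑ j, ((T1 n m hn).delta j true).2.length = m * (2 * n + 3) := by
    rw [Finset.sum_eq_single_of_mem ⟨2 * n - 1, hlast⟩ (Finset.mem_univ _),
      T1_delta_true_last n m hn _ rfl, hblock le_rfl]
    intro j _ hj
    have hj' : j.val ≠ 2 * n - 1 := fun h => hj (Fin.ext h)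
    have : j.val < 2 * n := j.isLt
    rw [T1_delta_true_of_lt n m hn j (by omega), List.length_nil]
  rw [Finset.sum_add_distrib, hzeros, hones]
  ring

end T1

theorem stmt7 (n : ℕ) (hn : 1 ≤ n) (m : ℕ) (hm : m = 16 * n ^ 2 + 36 * n + 19) :
    2 * Cstd (xnm n m) < m ^ 2 := by
  have hC := Cstd_le_of_output (T1_output_p1 n m hn)
  have hσ := stdEnc_length_le (T1 n m hn)
  rw [T1_sum_output_length] at hσ
  rw [p1_length] at hC
  have hp : (2 * n - 1) * (m + 1) ≤ 2 * n * (m + 1) := Nat.mul_le_mul_right _ (Nat.sub_le _ _)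
  rw [T1_n] at hσ
  subst hm
  nlinarith
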